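/- With H^N_j as above, for |x−x'| ≤ C 2^{−(j−N)} one has the Hölder estimate |H^N_j(x,y) − H^N_j(x',y)| ≤ C 2^{jε} |x−x'|^ε 2^{(j−N)n}. -/

import Mathlib

/-!
The difference of the two integrands is `(D_j(x,z) - D_j(x',z)) b₁(z) S_{j-N-1}(z,y) b₁(y)`.
The Hölder regularity of `S_j` and `S_{j-1}` in the first variable bounds the first factor by
`2^{j(n+ε)} |x-x'|^ε`, the size condition bounds `S_{j-N-1}` by `2^{(j-N-1)n}`, and the support
condition confines everything to two balls of radius `~ 2^{-j}`, of total measure `~ 2^{-jn}`.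
Multiplying the three bounds gives `2^{jε} |x-x'|^ε 2^{(j-N)n}`.
-/

open MeasureTheory

noncomputable abbrev E (n : ℕ) := EuclideanSpace ℝ (Fin n)

def IsApproxId (n : ℕ) (Ca ε : ℝ) (b : E n → ℂ) (S : ℤ → E n → E n → ℂ) : Prop :=
  (∀ j : ℤ, Measurable (Function.uncurry (S j))) ∧
  (∀ (j : ℤ) (x y : E n), ‖S j x y‖ ≤ Ca * (2:ℝ) ^ ((j:ℝ) * n)) ∧
  (∀ (j : ℤ) (x y : E n), Ca * (2:ℝ) ^ (-(j:ℝ)) ≤ ‖x - y‖ → S j x y = 0) ∧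
  (∀ (j : ℤ) (x x' y : E n),
      ‖S j x y - S j x' y‖ ≤ Ca * (2:ℝ) ^ ((j:ℝ) * ((n:ℝ) + ε)) * ‖x - x'‖ ^ ε) ∧
  (∀ (j : ℤ) (x y y' : E n),
      ‖S j x y - S j x y'‖ ≤ Ca * (2:ℝ) ^ ((j:ℝ) * ((n:ℝ) + ε)) * ‖y - y'‖ ^ ε) ∧
  (∀ (j : ℤ) (x x' y y' : E n), ‖S j x y - S j x y' - (S j x' y - S j x' y')‖ ≤
      Ca * (2:ℝ) ^ ((j:ℝ) * ((n:ℝ) + 2*ε)) * ‖x - x'‖ ^ ε * ‖y - y'‖ ^ ε) ∧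
  (∀ (j : ℤ) (x : E n), (∫ y, S j x y * b y) = 1) ∧
  (∀ (j : ℤ) (y : E n), (∫ x, S j x y * b x) = 1)

open Metric
open scoped ENNReal

section

variable {α F : Type*} [MeasurableSpace α] [NormedAddCommGroup F] {μ : Measure α} {f g : α → F}
  {s t : Set α} {M : ℝ}

theorem integrable_of_norm_le_of_eq_zero_outside (hs : μ s < ∞) (hf : AEStronglyMeasurable f μ)
    (hM : ∀ z, ‖f z‖ ≤ M) (hfs : ∀ z ∉ s, f z = 0) : Integrable f μ :=
  (Measure.integrableOn_of_bounded hs.ne hf (ae_of_all _ hM)).integrable_of_forall_notMem_eq_zero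
    hfs

theorem norm_integral_sub_integral_le_of_eq_zero_outside [NormedSpace ℝ F] (hs : μ s < ∞)
    (ht : μ t < ∞) (hf : Integrable f μ) (hg : Integrable g μ) (hfs : ∀ z ∉ s, f z = 0)
    (hgt : ∀ z ∉ t, g z = 0) (hM : ∀ z, ‖f z - g z‖ ≤ M) :
    ‖∫ z, f z ∂μ - ∫ z, g z ∂μ‖ ≤ M * μ.real (s ∪ t) := by
  have hvanish : ∀ z ∉ s ∪ t, f z - g z = 0 := fun z hz => by
    rw [Set.mem_union, not_or] at hz
    rw [hfs z hz.1, hgt z hz.2, sub_zero]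
  calc ‖∫ z, f z ∂μ - ∫ z, g z ∂μ‖ = ‖∫ z in s ∪ t, f z - g z ∂μ‖ := by
        rw [setIntegral_eq_integral_of_forall_compl_eq_zero hvanish, integral_sub hf hg]
    _ ≤ M * μ.real (s ∪ t) :=
        norm_setIntegral_le_of_norm_le_const (measure_union_lt_top hs ht) fun z _ => hM z

end

namespace IsApproxId

variable {n : ℕ} {Ca ε B A : ℝ} {b K : E n → ℂ} {S : ℤ → E n → E n → ℂ}

theorem nonneg (hS : IsApproxId n Ca ε b S) : 0 ≤ Ca :=
  nonneg_of_mul_nonneg_left ((norm_nonneg _).trans (hS.2.1 0 0 0)) (by positivity)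

theorem norm_le_of_le (hS : IsApproxId n Ca ε b S) {k j : ℤ} (hkj : k ≤ j) (x z : E n) :
    ‖S k x z‖ ≤ Ca * 2 ^ ((j : ℝ) * n) := by
  refine (hS.2.1 k x z).trans (mul_le_mul_of_nonneg_left ?_ hS.nonneg)
  exact Real.rpow_le_rpow_of_exponent_le one_le_two (by gcongr)

theorem norm_sub_le_of_le (hS : IsApproxId n Ca ε b S) (hε : 0 ≤ ε) {k j : ℤ} (hkj : k ≤ j)
    (x x' z : E n) :
    ‖S k x z - S k x' z‖ ≤ Ca * 2 ^ ((j : ℝ) * (n + ε)) * ‖x - x'‖ ^ ε := by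
  refine (hS.2.2.2.1 k x x' z).trans (by gcongr; exacts [hS.nonneg, one_le_two])

theorem sub_pred_eq_zero (hS : IsApproxId n Ca ε b S) {j : ℤ} {x z : E n}
    (hz : z ∉ closedBall x (Ca * 2 ^ (1 - (j : ℝ)))) : S j x z - S (j - 1) x z = 0 := by
  rw [mem_closedBall', not_le, dist_eq_norm] at hz
  have hj : Ca * 2 ^ (-(j : ℝ)) ≤ ‖x - z‖ := hz.le.trans' <|
    mul_le_mul_of_nonneg_left (Real.rpow_le_rpow_of_exponent_le one_le_two (by linarith)) hS.nonneg
  have hj1 : Ca * 2 ^ (-((j - 1 : ℤ) : ℝ)) ≤ ‖x - z‖ := by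
    rw [Int.cast_sub, Int.cast_one, neg_sub]; exact hz.le
  rw [hS.2.2.1 j x z hj, hS.2.2.1 (j - 1) x z hj1, sub_zero]

theorem norm_sub_pred_le (hS : IsApproxId n Ca ε b S) (j : ℤ) (x z : E n) :
    ‖S j x z - S (j - 1) x z‖ ≤ 2 * Ca * 2 ^ ((j : ℝ) * n) := by
  calc _ ≤ ‖S j x z‖ + ‖S (j - 1) x z‖ := norm_sub_le _ _
    _ ≤ Ca * 2 ^ ((j : ℝ) * n) + Ca * 2 ^ ((j : ℝ) * n) :=
        add_le_add (hS.norm_le_of_le le_rfl x z) (hS.norm_le_of_le (by omega) x z)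
    _ = _ := by ring

theorem norm_sub_pred_sub_le (hS : IsApproxId n Ca ε b S) (hε : 0 ≤ ε) (j : ℤ) (x x' z : E n) :
    ‖(S j x z - S (j - 1) x z) - (S j x' z - S (j - 1) x' z)‖ ≤
      2 * Ca * 2 ^ ((j : ℝ) * (n + ε)) * ‖x - x'‖ ^ ε := by
  calc _ = ‖(S j x z - S j x' z) - (S (j - 1) x z - S (j - 1) x' z)‖ := by ring_nf
    _ ≤ ‖S j x z - S j x' z‖ + ‖S (j - 1) x z - S (j - 1) x' z‖ := norm_sub_le _ _
    _ ≤ Ca * 2 ^ ((j : ℝ) * (n + ε)) * ‖x - x'‖ ^ ε + Ca * 2 ^ ((j : ℝ) * (n + ε)) * ‖x - x'‖ ^ ε :=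
        add_le_add (hS.norm_sub_le_of_le hε le_rfl x x' z)
          (hS.norm_sub_le_of_le hε (by omega) x x' z)
    _ = _ := by ring

theorem integrable_sub_pred_mul_mul (hS : IsApproxId n Ca ε b S) (hbm : Measurable b)
    (hb : ∀ z, ‖b z‖ ≤ B) (hKm : AEStronglyMeasurable K) (hK : ∀ z, ‖K z‖ ≤ A) (j : ℤ)
    (x : E n) : Integrable (fun z => (S j x z - S (j - 1) x z) * b z * K z) :=
  integrable_of_norm_le_of_eq_zero_outside measure_closedBall_lt_top
    ((((hS.1 j).of_uncurry_left.sub (hS.1 (j - 1)).of_uncurry_left).mul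
      hbm).aestronglyMeasurable.mul hKm)
    (fun z => norm_mul_le_of_le (norm_mul_le_of_le (hS.norm_sub_pred_le j x z) (hb z)) (hK z))
    (fun z hz => by rw [hS.sub_pred_eq_zero hz, zero_mul, zero_mul])

theorem norm_integral_sub_pred_mul_mul_sub_le (hS : IsApproxId n Ca ε b S) (hε : 0 ≤ ε)
    (hbm : Measurable b) (hb : ∀ z, ‖b z‖ ≤ B) (hKm : AEStronglyMeasurable K)
    (hK : ∀ z, ‖K z‖ ≤ A) (j : ℤ) (x x' : E n) :
    ‖(∫ z, (S j x z - S (j - 1) x z) * b z * K z) -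
        ∫ z, (S j x' z - S (j - 1) x' z) * b z * K z‖ ≤
      2 * Ca * 2 ^ ((j : ℝ) * (n + ε)) * ‖x - x'‖ ^ ε * B * A *
        (2 * (Ca * 2 ^ (1 - (j : ℝ))) ^ n * volume.real (closedBall (0 : E n) 1)) := by
  set r := Ca * 2 ^ (1 - (j : ℝ))
  have hCa := hS.nonneg
  have hr : 0 ≤ r := by positivity
  have hB : 0 ≤ B := (norm_nonneg _).trans (hb 0)
  have hA : 0 ≤ A := (norm_nonneg _).trans (hK 0)
  have hvol : volume.real (closedBall x r ∪ closedBall x' r) ≤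
      2 * r ^ n * volume.real (closedBall (0 : E n) 1) := by
    calc _ ≤ volume.real (closedBall x r) + volume.real (closedBall x' r) :=
          measureReal_union_le _ _
      _ = _ := by
          rw [Measure.addHaar_real_closedBall' _ _ hr, Measure.addHaar_real_closedBall' _ _ hr,
            finrank_euclideanSpace_fin]
          ring
  have hvanish : ∀ w z, z ∉ closedBall w r → (S j w z - S (j - 1) w z) * b z * K z = 0 :=
    fun w z hz => by rw [hS.sub_pred_eq_zero hz, zero_mul, zero_mul]
  calc _ ≤ (2 * Ca * 2 ^ ((j : ℝ) * (n + ε)) * ‖x - x'‖ ^ ε * B * A) *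
        volume.real (closedBall x r ∪ closedBall x' r) :=
        norm_integral_sub_integral_le_of_eq_zero_outside measure_closedBall_lt_top
          measure_closedBall_lt_top (hS.integrable_sub_pred_mul_mul hbm hb hKm hK j x)
          (hS.integrable_sub_pred_mul_mul hbm hb hKm hK j x') (hvanish x) (hvanish x') fun z => by
            rw [← sub_mul, ← sub_mul]
            exact norm_mul_le_of_le
              (norm_mul_le_of_le (hS.norm_sub_pred_sub_le hε j x x' z) (hb z)) (hK z)
    _ ≤ _ := by gcongr

end IsApproxId

theorem tb_product_HNj_holder_general
    (n : ℕ) (ε : ℝ) (hε : 0 < ε)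
    (b₁ : E n → ℂ) (B : ℝ) (hb₁m : Measurable b₁) (hb₁ : ∀ x, ‖b₁ x‖ ≤ B)
    (Ca : ℝ)
    (S : ℤ → E n → E n → ℂ) (hS : IsApproxId n Ca ε b₁ S) :
    ∃ C : ℝ, 0 < C ∧ ∀ (N : ℕ) (j : ℤ) (x x' y : E n),
      ‖x - x'‖ ≤ C * (2:ℝ) ^ (-((j:ℝ) - (N:ℝ))) →
      ‖(∫ z, (S j x z - S (j-1) x z) * b₁ z * (S (j - N - 1) z y * b₁ y)) -
        (∫ z, (S j x' z - S (j-1) x' z) * b₁ z * (S (j - N - 1) z y * b₁ y))‖ ≤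
        C * (2:ℝ) ^ ((j:ℝ) * ε) * ‖x - x'‖ ^ ε * (2:ℝ) ^ (((j:ℝ) - (N:ℝ)) * n) := by
  have hCa := hS.nonneg
  have hB : 0 ≤ B := (norm_nonneg _).trans (hb₁ 0)
  set V := volume.real (closedBall (0 : E n) 1)
  refine ⟨4 * Ca ^ (n + 2) * B ^ 2 * V + 1, by positivity, fun N j x x' y _ => ?_⟩
  have hK (z : E n) : ‖S (j - N - 1) z y * b₁ y‖ ≤ Ca * 2 ^ (((j : ℝ) - N - 1) * n) * B :=
    norm_mul_le_of_le (by simpa using hS.2.1 (j - N - 1) z y) (hb₁ y)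
  have hKm : AEStronglyMeasurable fun z => S (j - N - 1) z y * b₁ y :=
    ((hS.1 _).of_uncurry_right.mul_const _).aestronglyMeasurable
  have hpow : (2 : ℝ) ^ ((j : ℝ) * (n + ε)) * 2 ^ (((j : ℝ) - N - 1) * n) * (2 ^ (1 - (j : ℝ))) ^ n
      = 2 ^ ((j : ℝ) * ε) * 2 ^ (((j : ℝ) - N) * n) := by
    rw [← Real.rpow_natCast, ← Real.rpow_mul zero_le_two, ← Real.rpow_add two_pos,
      ← Real.rpow_add two_pos, ← Real.rpow_add two_pos]
    ring_nf
  calc _ ≤ 2 * Ca * 2 ^ ((j : ℝ) * (n + ε)) * ‖x - x'‖ ^ ε * B *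
        (Ca * 2 ^ (((j : ℝ) - N - 1) * n) * B) * (2 * (Ca * 2 ^ (1 - (j : ℝ))) ^ n * V) :=
        hS.norm_integral_sub_pred_mul_mul_sub_le hε.le hb₁m hb₁ hKm hK j x x'
    _ = 4 * Ca ^ (n + 2) * B ^ 2 * V * 2 ^ ((j : ℝ) * ε) * ‖x - x'‖ ^ ε *
        2 ^ (((j : ℝ) - N) * n) := by
        rw [mul_pow]; linear_combination 4 * Ca ^ (n + 2) * B ^ 2 * V * ‖x - x'‖ ^ ε * hpow
    _ ≤ _ := by gcongr; linarith

/-- Hölder estimate (2.5) for `H^N_j(x,y) = ∫ D_j(x,z) b₁(z) S_{j-N-1}(z,y) b₁(y) dz`: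
for `|x-x'| ≤ C 2^{-(j-N)}`,
`|H^N_j(x,y) - H^N_j(x',y)| ≤ C 2^{jε} |x-x'|^ε 2^{(j-N)n}`. -/
theorem tb_product_HNj_holder
    (n : ℕ) (ε : ℝ) (hε : 0 < ε) (hε1 : ε ≤ 1)
    (b₁ : E n → ℂ) (B : ℝ) (hb₁m : Measurable b₁) (hb₁ : ∀ x, ‖b₁ x‖ ≤ B)
    (Ca : ℝ) (hCa : 0 < Ca)
    (S : ℤ → E n → E n → ℂ) (hS : IsApproxId n Ca ε b₁ S) :
    ∃ C : ℝ, 0 < C ∧ ∀ (N : ℕ) (j : ℤ) (x x' y : E n),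
      ‖x - x'‖ ≤ C * (2:ℝ) ^ (-((j:ℝ) - (N:ℝ))) →
      ‖(∫ z, (S j x z - S (j-1) x z) * b₁ z * (S (j - N - 1) z y * b₁ y)) -
        (∫ z, (S j x' z - S (j-1) x' z) * b₁ z * (S (j - N - 1) z y * b₁ y))‖ ≤
        C * (2:ℝ) ^ ((j:ℝ) * ε) * ‖x - x'‖ ^ ε * (2:ℝ) ^ (((j:ℝ) - (N:ℝ)) * n) :=
  tb_product_HNj_holder_general n ε hε b₁ B hb₁m hb₁ Ca S hS
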